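/- Let A be a commutative ring and I ⊆ A an ideal. The canonical map from the symmetric algebra Sym_{A/I}(I/I²) to the associated graded ring ⊕_{n≥0} Iⁿ/Iⁿ⁺¹ is a surjective graded A/I-algebra homomorphism. -/

import Mathlib

set_option linter.unnecessarySimpa false

noncomputable section

/-- The associated graded ring gr_I(A) = ⊕ₙ Iⁿ/Iⁿ⁺¹, realized as the quotient of the
Rees algebra ⊕ₙ Iⁿ by the ideal generated by (the degree-zero copy of) I. -/
abbrev grRing {A : Type*} [CommRing A] (I : Ideal A) : Type _ :=
  (reesAlgebra I) ⧸
    (Ideal.span ((algebraMap A (reesAlgebra I)) '' (I : Set A)))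

/-- The class in `grRing I`, in degree `n`, of an element `a ∈ Iⁿ`. -/
def grDeg {A : Type*} [CommRing A] (I : Ideal A) (n : ℕ) (a : A) (ha : a ∈ I ^ n) :
    grRing I :=
  Ideal.Quotient.mk _ (⟨Polynomial.monomial n a, reesAlgebra.monomial_mem.2 ha⟩ :
    reesAlgebra I)

/-!
The Rees algebra `⊕ₙ Iⁿ` is generated over `A` by its degree-one part `I`, so its
quotient `gr_I(A)` is generated by the degree-one classes. The degree-one class map `I → gr_I(A)`
kills `I • I` because `I` acts as zero on `gr_I(A)`, hence factors through `I/I²`.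
-/

open Polynomial

namespace reesAlgebra

variable {R : Type*} [CommRing R] (I : Ideal R)

def monomialOne : I →ₗ[R] reesAlgebra I :=
  LinearMap.codRestrict (reesAlgebra I).toSubmodule ((monomial 1).comp I.subtype)
    fun x => monomial_mem.2 (by simpa using x.2)

theorem adjoin_range_monomialOne : Algebra.adjoin R (Set.range (monomialOne I)) = ⊤ := by
  apply Subalgebra.map_injective (f := (reesAlgebra I).val) Subtype.val_injective
  rw [AlgHom.map_adjoin, Algebra.map_top, Subalgebra.range_val, ← Set.range_comp]
  convert adjoin_monomial_eq_reesAlgebra I using 2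
  change Set.range (monomial 1 ∘ ((↑) : I → R)) = _
  rw [Set.range_comp, Subtype.range_coe]
  rfl

end reesAlgebra

namespace grRing

variable {A : Type*} [CommRing A] (I : Ideal A)

theorem algebraMap_eq_zero {a : A} (ha : a ∈ I) : algebraMap A (grRing I) a = 0 :=
  Ideal.Quotient.eq_zero_iff_mem.mpr (Ideal.subset_span ⟨a, ha, rfl⟩)

theorem smul_eq_zero {a : A} (ha : a ∈ I) (z : grRing I) : a • z = 0 := by
  rw [Algebra.smul_def (A := grRing I), algebraMap_eq_zero I ha, zero_mul]

def degOne : I →ₗ[A] grRing I :=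
  (Ideal.Quotient.mkₐ A _).toLinearMap ∘ₗ reesAlgebra.monomialOne I

def ofCotangent : I.Cotangent →ₗ[A] grRing I :=
  Submodule.liftQ _ (degOne I) <| Submodule.smul_le.2 fun a ha x _ => by
    rw [LinearMap.mem_ker, map_smul, smul_eq_zero I ha]

theorem ofCotangent_toCotangent (x : I) :
    ofCotangent I (I.toCotangent x) = grDeg I 1 (x : A) (by simpa using x.2) :=
  rfl

theorem adjoin_range_ofCotangent :
    Algebra.adjoin A (Set.range (ofCotangent I)) = ⊤ := by
  have hrange : Set.range (ofCotangent I) =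
      Ideal.Quotient.mkₐ A _ '' Set.range (reesAlgebra.monomialOne I) := by
    rw [← Set.range_comp, ← (Ideal.toCotangent_surjective I).range_comp]
    rfl
  rw [hrange, ← AlgHom.map_adjoin, reesAlgebra.adjoin_range_monomialOne, Algebra.map_top,
    AlgHom.range_eq_top]
  exact Ideal.Quotient.mkₐ_surjective A _

end grRing

/-- for an ideal I of a commutative ring A, the associated graded ring
gr_I(A) is an A/I-algebra (I acts as zero), and the canonical map
Sym_{A/I}(I/I²) → gr_I(A) is a surjective graded algebra homomorphism; equivalently,
there is a linear map λ : I/I² → gr_I(A) sending the class of a ∈ I to the degree-one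
class of a, whose image generates gr_I(A) as an algebra. -/
theorem stmt_4 {A : Type*} [CommRing A] (I : Ideal A) :
    (∀ a ∈ I, algebraMap A (grRing I) a = 0) ∧
      ∃ lam : I.Cotangent →ₗ[A] grRing I,
        (∀ x : I, lam (I.toCotangent x) = grDeg I 1 (x : A) (by simpa using x.2)) ∧
        Algebra.adjoin A
            ((LinearMap.range lam : Submodule A (grRing I)) : Set (grRing I)) = ⊤ :=
  ⟨fun _ ha => grRing.algebraMap_eq_zero I ha, grRing.ofCotangent I,
    grRing.ofCotangent_toCotangent I, by
      rw [LinearMap.coe_range]; exact grRing.adjoin_range_ofCotangent I⟩
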